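/- Let X ~ N(θ, σ²) with |θ| ≥ a > 0 and suppose a/σ ≥ Φ⁻¹((δ+1)/2) − Φ⁻¹(α'/(2s)). Then P(|X| ≤ max(σΦ⁻¹(α'/(2s)) + a, 0)) ≤ α'/s. -/

import Mathlib

open MeasureTheory ProbabilityTheory Real Set

/-- The standard normal CDF. -/
noncomputable def Phi (y : ℝ) : ℝ := ((gaussianReal 0 1) (Set.Iic y)).toReal

/-- The standard normal quantile function (inverse CDF). -/
noncomputable def PhiInv : ℝ → ℝ := Function.invFun Phi

/-!
If `|x| ≤ σq + a` and `a ≤ |θ|`, then `|x - θ| ≥ |θ| - |x| ≥ -σq`: the event lies in the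
two-sided tail `{|X - θ| ≥ -σq}` of `N(θ, σ²)`, of probability at most `2Φ(q)`, and
`2Φ(q) = α'/s` for `q = Φ⁻¹(α'/(2s))`. When `σq + a < 0` the event is `{0}`, which is null.
`Φ(Φ⁻¹ t) = t` for `0 < t < 1` because `Φ` is continuous (the Gaussian has no atoms), hence
onto `(0, 1)`; outside that range `PhiInv` is a junk value of `Function.invFun`.
-/

theorem ProbabilityTheory.continuous_cdf (μ : Measure ℝ) [IsProbabilityMeasure μ]
    [NullSingletonClass μ] : Continuous (cdf μ) := by
  refine continuous_iff_continuousAt.2 fun x ↦ ?_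
  rw [(monotone_cdf μ).continuousAt_iff_leftLim_eq_rightLim, (cdf μ).rightLim_eq]
  have hjump := (cdf μ).measure_singleton x
  rw [measure_cdf, measure_singleton, eq_comm, ENNReal.ofReal_eq_zero, sub_nonpos] at hjump
  exact le_antisymm ((monotone_cdf μ).leftLim_le le_rfl) hjump

theorem ProbabilityTheory.exists_cdf_eq {μ : Measure ℝ} (hμ : Continuous (cdf μ)) {t : ℝ}
    (ht₀ : 0 < t) (ht₁ : t < 1) : ∃ x, cdf μ x = t :=
  mem_range_of_exists_le_of_exists_ge hμ
    ((tendsto_cdf_atBot μ).eventually_le_const ht₀).exists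
    ((tendsto_cdf_atTop μ).eventually_const_le ht₁).exists

theorem Phi_eq_cdf : Phi = cdf (gaussianReal 0 1) := by
  ext y
  rw [Phi, cdf_eq_real, measureReal_def]

theorem Phi_PhiInv {t : ℝ} (ht₀ : 0 < t) (ht₁ : t < 1) : Phi (PhiInv t) = t := by
  have := nullSingletonClass_gaussianReal (μ := 0) one_ne_zero
  rw [PhiInv, Phi_eq_cdf]
  exact Function.invFun_eq (exists_cdf_eq (continuous_cdf _) ht₀ ht₁)

theorem gaussianReal_eq_map_const_add_const_mul (θ σ : ℝ) :
    gaussianReal θ (σ ^ 2).toNNReal = (gaussianReal 0 1).map (fun z ↦ θ + σ * z) := by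
  rw [show (fun z ↦ θ + σ * z) = (θ + ·) ∘ (σ * ·) from rfl,
    ← Measure.map_map (measurable_const_add θ) (measurable_const_mul σ), gaussianReal_map_const_mul, gaussianReal_map_const_add, mul_zero, zero_add, mul_one]
  congr
  ext
  simp [sq_nonneg]

theorem gaussianReal_Ici_eq_Iic_neg (v : NNReal) (r : ℝ) :
    gaussianReal 0 v (Ici r) = gaussianReal 0 v (Iic (-r)) := by
  conv_rhs => rw [← neg_zero, ← gaussianReal_map_neg,
    Measure.map_apply measurable_neg measurableSet_Iic, neg_preimage, neg_Iic, neg_neg]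

theorem gaussianReal_real_le_abs_sub {σ : ℝ} (θ : ℝ) (hσ : 0 < σ) (r : ℝ) :
    (gaussianReal θ (σ ^ 2).toNNReal).real {x | σ * r ≤ |x - θ|} ≤ 2 * Phi (-r) := by
  rw [gaussianReal_eq_map_const_add_const_mul,
    map_measureReal_apply (by fun_prop) (measurableSet_le (by fun_prop) (by fun_prop))]
  have htails : (fun z ↦ θ + σ * z) ⁻¹' {x | σ * r ≤ |x - θ|} ⊆ Iic (-r) ∪ Ici r := by
    intro z hz
    simp only [mem_preimage, mem_ofPred_eq, add_sub_cancel_left, abs_mul, abs_of_pos hσ] at hz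
    exact le_abs'.1 (le_of_mul_le_mul_left hz hσ)
  calc _ ≤ (gaussianReal 0 1).real (Iic (-r) ∪ Ici r) := measureReal_mono htails
    _ ≤ (gaussianReal 0 1).real (Iic (-r)) + (gaussianReal 0 1).real (Ici r) :=
      measureReal_union_le _ _
    _ = 2 * Phi (-r) := by
      rw [measureReal_def, measureReal_def, gaussianReal_Ici_eq_Iic_neg, Phi]
      ring

theorem setOf_abs_le_max_subset {a b θ : ℝ} (hθ : a ≤ |θ|) :
    {x : ℝ | |x| ≤ max (b + a) 0} ⊆ {x | -b ≤ |x - θ|} ∪ {0} := by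
  intro x (hx : |x| ≤ max (b + a) 0)
  rcases le_max_iff.1 hx with hx | hx
  · have := abs_sub_abs_le_abs_sub θ x
    exact Or.inl (show -b ≤ |x - θ| by rw [abs_sub_comm]; linarith)
  · exact Or.inr (abs_nonpos_iff.1 hx)

theorem twosided_miss_bound_general (θ σ a α' : ℝ) (s : ℕ) (hs : 1 ≤ s)
    (hσ : 0 < σ) (hθ : a ≤ |θ|)
    (hα'0 : 0 < α') (hα'1 : α' < 1) :
    ((gaussianReal θ (σ ^ 2).toNNReal)
        {x : ℝ | |x| ≤ max (σ * PhiInv (α' / (2 * s)) + a) 0}).toReal ≤ α' / s := by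
  set μ := gaussianReal θ (σ ^ 2).toNNReal
  set q := PhiInv (α' / (2 * s))
  have hs' : (1 : ℝ) ≤ s := by exact_mod_cast hs
  have hq : Phi q = α' / (2 * s) :=
    Phi_PhiInv (by positivity) (by rw [div_lt_one (by positivity)]; linarith)
  have := nullSingletonClass_gaussianReal (μ := θ) (v := (σ ^ 2).toNNReal) (by simp [hσ.ne'])
  calc μ.real {x : ℝ | |x| ≤ max (σ * q + a) 0}
      ≤ μ.real ({x | σ * -q ≤ |x - θ|} ∪ {0}) := by
        rw [mul_neg]; exact measureReal_mono (setOf_abs_le_max_subset hθ)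
    _ ≤ μ.real {x | σ * -q ≤ |x - θ|} + μ.real {0} := measureReal_union_le _ _
    _ ≤ 2 * Phi (- -q) := by
        rw [measureReal_def μ {0}, measure_singleton, ENNReal.toReal_zero, add_zero]
        exact gaussianReal_real_le_abs_sub θ hσ (-q)
    _ = α' / s := by
        rw [neg_neg, hq]
        field_simp

/-- For `X ~ N(θ, σ²)` with `|θ| ≥ a > 0` and
`a/σ ≥ Φ⁻¹((δ+1)/2) − Φ⁻¹(α'/(2s))`, we have
`P(|X| ≤ max(σΦ⁻¹(α'/(2s)) + a, 0)) ≤ α'/s`. -/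
theorem twosided_miss_bound (θ σ a δ α' : ℝ) (s : ℕ) (hs : 1 ≤ s)
    (hσ : 0 < σ) (ha : 0 < a) (hθ : a ≤ |θ|)
    (hδ0 : 0 < δ) (hδ1 : δ < 1) (hα'0 : 0 < α') (hα'1 : α' < 1)
    (hsnr : PhiInv ((δ + 1) / 2) - PhiInv (α' / (2 * s)) ≤ a / σ) :
    ((gaussianReal θ (σ ^ 2).toNNReal)
        {x : ℝ | |x| ≤ max (σ * PhiInv (α' / (2 * s)) + a) 0}).toReal ≤ α' / s :=
  twosided_miss_bound_general θ σ a α' s hs hσ hθ hα'0 hα'1
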